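/- Fix an integer k ≥ 1, a real z ≥ 1, and reals ζ₁, ζ₂ ≥ 1. There exist constants γ₁, γ₂ ≥ 1 depending only on z, ζ₁, ζ₂ such that for every instance of the constrained-clustering setup (with S, Q, Ψ, π_Q, n_b, n_a as in the setup), if n_b ≥ n_a, then Cost(X,S) ≤ γ₁ · (Ψ + n_b · r^z) ≤ γ₁ · γ₂ · Cost(X,S). -/

import Mathlib

open scoped BigOperators Classical

/-- `dSet x C` is the distance from the point `x` to the finite set `C`. -/
noncomputable def dSet {d : ℕ} (x : EuclideanSpace ℝ (Fin d))
    (C : Finset (EuclideanSpace ℝ (Fin d))) : ℝ :=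
  sInf ((fun c => dist x c) '' (C : Set (EuclideanSpace ℝ (Fin d))))

/-- `kzCost z X C = Σ_{x ∈ X} dist(x,C)^z`. -/
noncomputable def kzCost {d : ℕ} (z : ℝ) (X C : Finset (EuclideanSpace ℝ (Fin d))) : ℝ :=
  ∑ x ∈ X, dSet x C ^ z

/-!
Write `r = dist x p`. Upper bound: the centres of `Q` at distance at least `r` from `x`,
together with `p`, form a feasible solution of the constrained problem. A point served by a
centre of `Q` inside `B_r(x)` is then moved to `p`, which costs at most its old distance
plus `2r`; by `n_a ≤ n_b` there are at most `2 n_b` such points, so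
`Cost(X,S) ≲ Cost(X,Q) + n_b r^z ≲ Ψ + n_b r^z`.
Lower bound: every centre of `S` is at distance at least `r` from `x`, so a point served by
a centre of `Q` inside `B_{r/2}(x)` pays at least `r/2` in `Q` and `S` together, whence
`n_b r^z ≲ Cost(X,Q) + Cost(X,S) ≲ Cost(X,S)`; and `Ψ ≲ Cost(X,Q) ≲ Cost(X,S)`.
-/

lemma Real.add_rpow_le_two_rpow_mul {a b z : ℝ} (ha : 0 ≤ a) (hb : 0 ≤ b) (hz : 0 ≤ z) :
    (a + b) ^ z ≤ 2 ^ z * (a ^ z + b ^ z) := by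
  have hmax : max a b ^ z ≤ a ^ z + b ^ z := by
    rcases le_total a b with h | h
    · rw [max_eq_right h]; linarith [Real.rpow_nonneg ha z]
    · rw [max_eq_left h]; linarith [Real.rpow_nonneg hb z]
  calc (a + b) ^ z ≤ (2 * max a b) ^ z := by
        gcongr; linarith [le_max_left a b, le_max_right a b]
    _ = 2 ^ z * max a b ^ z := Real.mul_rpow zero_le_two (le_max_of_le_left ha)
    _ ≤ 2 ^ z * (a ^ z + b ^ z) := by gcongr

lemma Real.four_rpow (z : ℝ) : (4 : ℝ) ^ z = 2 ^ z * 2 ^ z := by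
  rw [← Real.mul_rpow zero_le_two zero_le_two]; norm_num

lemma Finset.card_filter_lt_le_add {α : Type*} (s : Finset α) (f : α → ℝ) (a b : ℝ) :
    (s.filter (fun y => f y < b)).card ≤
      (s.filter (fun y => f y ≤ a)).card + (s.filter (fun y => a < f y ∧ f y < b)).card := by
  refine (Finset.card_le_card fun y hy => ?_).trans (Finset.card_union_le _ _)
  rw [Finset.mem_filter] at hy
  rcases le_or_gt (f y) a with h | h
  · exact Finset.mem_union_left _ (Finset.mem_filter.2 ⟨hy.1, h⟩)
  · exact Finset.mem_union_right _ (Finset.mem_filter.2 ⟨hy.1, h, hy.2⟩)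

section
variable {d : ℕ}

lemma dSet_nonneg (y : EuclideanSpace ℝ (Fin d)) (C : Finset (EuclideanSpace ℝ (Fin d))) :
    0 ≤ dSet y C := by
  rcases C.eq_empty_or_nonempty with rfl | ⟨c, hc⟩
  · simp [dSet]
  · exact le_csInf ⟨_, c, hc, rfl⟩ (by rintro b ⟨c', _, rfl⟩; exact dist_nonneg)

lemma dSet_le_dist (y : EuclideanSpace ℝ (Fin d)) {c : EuclideanSpace ℝ (Fin d)}
    {C : Finset (EuclideanSpace ℝ (Fin d))} (hc : c ∈ C) : dSet y C ≤ dist y c :=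
  csInf_le (C.finite_toSet.image _).bddBelow ⟨c, hc, rfl⟩

lemma exists_mem_dSet_eq_dist (y : EuclideanSpace ℝ (Fin d))
    {C : Finset (EuclideanSpace ℝ (Fin d))} (hC : C.Nonempty) : ∃ c ∈ C, dSet y C = dist y c := by
  obtain ⟨c, hc, h⟩ := Set.Nonempty.csInf_mem ((Finset.coe_nonempty.2 hC).image (dist y))
    (C.finite_toSet.image _)
  exact ⟨c, hc, h.symm⟩

lemma kzCost_nonneg (z : ℝ) (X C : Finset (EuclideanSpace ℝ (Fin d))) : 0 ≤ kzCost z X C :=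
  Finset.sum_nonneg fun y _ => Real.rpow_nonneg (dSet_nonneg y C) z

variable {z : ℝ} {X Q S : Finset (EuclideanSpace ℝ (Fin d))} {x p y c : EuclideanSpace ℝ (Fin d)}
  {π : EuclideanSpace ℝ (Fin d) → EuclideanSpace ℝ (Fin d)}

lemma rpow_dSet_filter_far_le (hz : 0 ≤ z) (hpQ : p ∈ Q) (hcQ : c ∈ Q)
    (hc : dist y c = dSet y Q) :
    dSet y (Q.filter fun q => dist x p ≤ dist q x) ^ z ≤
      2 ^ z * dSet y Q ^ z + if dist c x < dist x p then 4 ^ z * dist x p ^ z else 0 := by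
  split_ifs with hnear
  · have hpT : p ∈ Q.filter fun q => dist x p ≤ dist q x :=
      Finset.mem_filter.2 ⟨hpQ, (dist_comm x p).le⟩
    have hle : dSet y (Q.filter fun q => dist x p ≤ dist q x) ≤ dSet y Q + 2 * dist x p := by
      linarith [dSet_le_dist y hpT, dist_triangle4 y c x p]
    calc dSet y (Q.filter fun q => dist x p ≤ dist q x) ^ z ≤ (dSet y Q + 2 * dist x p) ^ z := by
          gcongr; exact dSet_nonneg _ _
      _ ≤ 2 ^ z * (dSet y Q ^ z + (2 * dist x p) ^ z) :=
          Real.add_rpow_le_two_rpow_mul (dSet_nonneg y Q) (by positivity) hz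
      _ = 2 ^ z * dSet y Q ^ z + 4 ^ z * dist x p ^ z := by
          rw [Real.mul_rpow zero_le_two dist_nonneg, Real.four_rpow]; ring
  · have hcT : c ∈ Q.filter fun q => dist x p ≤ dist q x :=
      Finset.mem_filter.2 ⟨hcQ, not_lt.1 hnear⟩
    calc dSet y (Q.filter fun q => dist x p ≤ dist q x) ^ z ≤ dSet y Q ^ z := by
          gcongr
          · exact dSet_nonneg _ _
          · exact hc ▸ dSet_le_dist y hcT
      _ ≤ 2 ^ z * dSet y Q ^ z + 0 := by
          rw [add_zero]
          exact le_mul_of_one_le_left (Real.rpow_nonneg (dSet_nonneg y Q) z)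
            (Real.one_le_rpow one_le_two hz)

lemma kzCost_filter_far_le (hz : 0 ≤ z) (hpQ : p ∈ Q)
    (hπ : ∀ y ∈ X, π y ∈ Q ∧ dist y (π y) = dSet y Q)
    (hba : (X.filter fun y => dist x p / 2 < dist (π y) x ∧ dist (π y) x < dist x p).card ≤
      (X.filter fun y => dist (π y) x ≤ dist x p / 2).card) :
    kzCost z X (Q.filter fun q => dist x p ≤ dist q x) ≤
      2 ^ z * kzCost z X Q +
        2 * (X.filter fun y => dist (π y) x ≤ dist x p / 2).card * (4 ^ z * dist x p ^ z) := by
  have hnear : ((X.filter fun y => dist (π y) x < dist x p).card : ℝ) ≤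
      2 * (X.filter fun y => dist (π y) x ≤ dist x p / 2).card := by
    have := Finset.card_filter_lt_le_add X (fun y => dist (π y) x) (dist x p / 2) (dist x p)
    norm_cast
    omega
  calc kzCost z X (Q.filter fun q => dist x p ≤ dist q x)
      ≤ ∑ y ∈ X, (2 ^ z * dSet y Q ^ z +
          if dist (π y) x < dist x p then 4 ^ z * dist x p ^ z else 0) :=
        Finset.sum_le_sum fun y hy => rpow_dSet_filter_far_le hz hpQ (hπ y hy).1 (hπ y hy).2
    _ = 2 ^ z * kzCost z X Q +
          (X.filter fun y => dist (π y) x < dist x p).card * (4 ^ z * dist x p ^ z) := by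
        rw [Finset.sum_add_distrib, ← Finset.mul_sum, ← Finset.sum_filter, Finset.sum_const,
          nsmul_eq_mul, kzCost]
    _ ≤ _ := by gcongr

lemma dist_rpow_le_of_dist_le_half (hz : 0 ≤ z) (hS : S.Nonempty)
    (hSfar : ∀ t ∈ S, dist x p ≤ dist t x) (hc : dist y c = dSet y Q)
    (hcx : dist c x ≤ dist x p / 2) :
    dist x p ^ z ≤ 4 ^ z * (dSet y Q ^ z + dSet y S ^ z) := by
  obtain ⟨s, hs, hds⟩ := exists_mem_dSet_eq_dist y hS
  have hle : dist x p ≤ 2 * (dSet y Q + dSet y S) := by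
    linarith [hSfar s hs, dist_triangle4 s y c x, dist_comm s y]
  calc dist x p ^ z ≤ (2 * (dSet y Q + dSet y S)) ^ z := by gcongr
    _ = 2 ^ z * (dSet y Q + dSet y S) ^ z :=
        Real.mul_rpow zero_le_two (add_nonneg (dSet_nonneg y Q) (dSet_nonneg y S))
    _ ≤ 2 ^ z * (2 ^ z * (dSet y Q ^ z + dSet y S ^ z)) := by
        gcongr; exact Real.add_rpow_le_two_rpow_mul (dSet_nonneg y Q) (dSet_nonneg y S) hz
    _ = 4 ^ z * (dSet y Q ^ z + dSet y S ^ z) := by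
        rw [Real.four_rpow]; ring

lemma card_mul_rpow_le_kzCost_add (hz : 0 ≤ z) (hS : S.Nonempty)
    (hSfar : ∀ t ∈ S, dist x p ≤ dist t x)
    (hπ : ∀ y ∈ X, π y ∈ Q ∧ dist y (π y) = dSet y Q) :
    (X.filter fun y => dist (π y) x ≤ dist x p / 2).card * dist x p ^ z ≤
      4 ^ z * (kzCost z X Q + kzCost z X S) := by
  rw [← nsmul_eq_mul, kzCost, kzCost, ← Finset.sum_add_distrib, Finset.mul_sum]
  refine (Finset.card_nsmul_le_sum _ _ _ fun y hy => ?_).trans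
    (Finset.sum_le_sum_of_subset_of_nonneg (Finset.filter_subset _ _) fun y _ _ => ?_)
  · rw [Finset.mem_filter] at hy
    exact dist_rpow_le_of_dist_le_half hz hS hSfar (hπ y hy.1).2 hy.2
  · have := Real.rpow_nonneg (dSet_nonneg y Q) z
    have := Real.rpow_nonneg (dSet_nonneg y S) z
    positivity

end

/-- If the number `n_b` of points assigned to centers in `B_{r/2}(x)` is at least the
number `n_a` of points assigned to centers in the annulus `B_r(x) \ B_{r/2}(x)`, then
`Ψ + n_b · r^z` is a constant-factor approximation of the optimal constrained
`(k,z)`-medoids cost `Cost(X,S)`. -/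
theorem constrained_estimate_ball
    (z ζ₁ ζ₂ : ℝ) (hz : 1 ≤ z) (hζ₁ : 1 ≤ ζ₁) (hζ₂ : 1 ≤ ζ₂) :
    ∃ γ₁ γ₂ : ℝ, 1 ≤ γ₁ ∧ 1 ≤ γ₂ ∧
      ∀ (k d : ℕ), 1 ≤ k → 1 ≤ d →
        ∀ (X S Q : Finset (EuclideanSpace ℝ (Fin d))) (x p : EuclideanSpace ℝ (Fin d))
          (Ψ : ℝ) (π : EuclideanSpace ℝ (Fin d) → EuclideanSpace ℝ (Fin d)),
          k < X.card → x ∈ X → p ∈ X → 0 < dist x p →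
          S ⊆ X → p ∈ S → S.card ≤ k → (∀ t ∈ S, dist x p ≤ dist t x) →
          (∀ T : Finset (EuclideanSpace ℝ (Fin d)), T ⊆ X → p ∈ T → T.card ≤ k →
            (∀ t ∈ T, dist x p ≤ dist t x) → kzCost z X S ≤ kzCost z X T) →
          Q ⊆ X → p ∈ Q → Q.card ≤ k →
          (∀ T : Finset (EuclideanSpace ℝ (Fin d)), T ⊆ X → p ∈ T → T.card ≤ k →
            kzCost z X Q ≤ ζ₁ * kzCost z X T) →
          (1 / ζ₂) * kzCost z X Q ≤ Ψ → Ψ ≤ ζ₂ * kzCost z X Q →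
          (∀ y ∈ X, π y ∈ Q ∧ dist y (π y) = dSet y Q) →
          (X.filter (fun y => dist x p / 2 < dist (π y) x ∧ dist (π y) x < dist x p)).card ≤
            (X.filter (fun y => dist (π y) x ≤ dist x p / 2)).card →
          kzCost z X S ≤
              γ₁ * (Ψ + ((X.filter (fun y => dist (π y) x ≤ dist x p / 2)).card : ℝ)
                * dist x p ^ z) ∧
            γ₁ * (Ψ + ((X.filter (fun y => dist (π y) x ≤ dist x p / 2)).card : ℝ)
                * dist x p ^ z) ≤ γ₁ * γ₂ * kzCost z X S := by
  have hz0 : 0 ≤ z := zero_le_one.trans hz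
  have h4z : 1 ≤ (4 : ℝ) ^ z := Real.one_le_rpow (by norm_num) hz0
  have h24 : (2 : ℝ) ^ z ≤ 4 ^ z := Real.rpow_le_rpow zero_le_two (by norm_num) hz0
  refine ⟨2 * 4 ^ z * ζ₂, ζ₁ * ζ₂ + 4 ^ z * (ζ₁ + 1), by nlinarith, by nlinarith, ?_⟩
  intro k d _ _ X S Q x p Ψ π _ _ _ _ hSX hpS hScard hSfar hSopt hQX hpQ hQcard hQapx hΨ₁ hΨ₂ hπ
    hba
  set r := dist x p
  set nb := (X.filter fun y => dist (π y) x ≤ r / 2).card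
  have hQΨ : kzCost z X Q ≤ ζ₂ * Ψ := by
    rwa [one_div_mul_eq_div, div_le_iff₀' (by positivity)] at hΨ₁
  have hQ0 := kzCost_nonneg z X Q
  have hΨ0 : 0 ≤ Ψ := (mul_nonneg (by positivity) hQ0).trans hΨ₁
  have hQS : kzCost z X Q ≤ ζ₁ * kzCost z X S := hQapx S hSX hpS hScard
  have hST : kzCost z X S ≤ kzCost z X (Q.filter fun q => r ≤ dist q x) :=
    hSopt _ ((Finset.filter_subset _ _).trans hQX) (Finset.mem_filter.2 ⟨hpQ, (dist_comm x p).le⟩)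
      ((Finset.card_filter_le _ _).trans hQcard) fun t ht => (Finset.mem_filter.1 ht).2
  have hnbS : (nb : ℝ) * r ^ z ≤ 4 ^ z * (kzCost z X Q + kzCost z X S) :=
    card_mul_rpow_le_kzCost_add hz0 ⟨p, hpS⟩ hSfar hπ
  constructor
  · calc kzCost z X S
        ≤ 2 ^ z * kzCost z X Q + 2 * nb * (4 ^ z * r ^ z) :=
          hST.trans (kzCost_filter_far_le hz0 hpQ hπ hba)
      _ ≤ 4 ^ z * (ζ₂ * Ψ) + 2 * nb * (4 ^ z * r ^ z) := by gcongr
      _ ≤ 2 * (4 ^ z * (ζ₂ * Ψ)) + ζ₂ * (2 * nb * (4 ^ z * r ^ z)) :=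
          add_le_add (le_mul_of_one_le_left (by positivity) one_le_two)
            (le_mul_of_one_le_left (by positivity) hζ₂)
      _ = 2 * 4 ^ z * ζ₂ * (Ψ + nb * r ^ z) := by ring
  · have hB : Ψ + nb * r ^ z ≤ (ζ₁ * ζ₂ + 4 ^ z * (ζ₁ + 1)) * kzCost z X S :=
      calc Ψ + nb * r ^ z ≤ ζ₂ * (ζ₁ * kzCost z X S) + 4 ^ z * (ζ₁ * kzCost z X S + kzCost z X S) :=
            add_le_add (hΨ₂.trans (by gcongr)) (hnbS.trans (by gcongr))
        _ = (ζ₁ * ζ₂ + 4 ^ z * (ζ₁ + 1)) * kzCost z X S := by ring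
    exact (mul_le_mul_of_nonneg_left hB (by positivity)).trans_eq (by ring)
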